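/- Let M be a negative definite symmetric integer n×n matrix with M_{ij} ≥ 0 for all i ≠ j. Suppose the 'dual graph' is connected, i.e., one cannot partition {1,…,n} into two nonempty sets S, T with M_{ij} = 0 for all i ∈ S, j ∈ T. Then there exists a vector r ∈ ℤ^n with all entries r_j > 0 such that every entry of Mr is strictly negative. -/

import Mathlib

open Matrix in


/-- Artin's lemma: Let `M` be a negative definite symmetric integer `n × n`
matrix with nonnegative off-diagonal entries whose dual graph is connected (no nontrivial
partition of the index set with all cross entries zero). Then there is `r ∈ ℤ^n` with all
entries positive such that every entry of `M.mulVec r` is strictly negative. -/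
theorem stmt_6 (n : ℕ) (M : Matrix (Fin n) (Fin n) ℤ)
    (hsymm : M.IsSymm)
    (hneg : (-(M.map (Int.cast : ℤ → ℝ))).PosDef)
    (hoffdiag : ∀ i j : Fin n, i ≠ j → 0 ≤ M i j)
    (hconn : ∀ S : Finset (Fin n), S.Nonempty → Sᶜ.Nonempty →
      ∃ i ∈ S, ∃ j ∈ Sᶜ, M i j ≠ 0) :
    ∃ r : Fin n → ℤ, (∀ j, 0 < r j) ∧ ∀ i, M.mulVec r i < 0 := by
  classical
  set A : Matrix (Fin n) (Fin n) ℝ := -(M.map (Int.cast : ℤ → ℝ)) with hAdef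
  have hAentry : ∀ i j, A i j = -(M i j : ℝ) := by
    intro i j; simp [hAdef, Matrix.map]
  have hAoff : ∀ i j, i ≠ j → A i j ≤ 0 := by
    intro i j hij
    rw [hAentry]
    have := hoffdiag i j hij
    push_cast
    linarith [(Int.cast_nonneg_iff.mpr this : (0:ℝ) ≤ (M i j : ℝ))]
  have hdet : IsUnit A.det := hneg.det_pos.ne'.isUnit
  set x : Fin n → ℝ := A⁻¹.mulVec (fun _ => 1) with hxdef
  have hAx : A.mulVec x = fun _ => (1:ℝ) := by
    rw [hxdef, Matrix.mulVec_mulVec, Matrix.mul_nonsing_inv _ hdet, Matrix.one_mulVec]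
  -- Step 1: x is nonnegative
  have hxnonneg : ∀ j, 0 ≤ x j := by
    by_contra h
    push_neg at h
    obtain ⟨j, hj⟩ := h
    set y : Fin n → ℝ := fun i => max (-(x i)) 0 with hydef
    set p : Fin n → ℝ := fun i => max (x i) 0 with hpdef
    have hynn : ∀ i, 0 ≤ y i := fun i => le_max_right _ _
    have hpnn : ∀ i, 0 ≤ p i := fun i => le_max_right _ _
    have hyp : ∀ i, y i * p i = 0 := by
      intro i
      rcases le_or_gt (x i) 0 with h1 | h1
      · have : p i = 0 := max_eq_right h1
        simp [this]
      · have : y i = 0 := max_eq_right (by linarith)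
        simp [this]
    have hxpy : x = fun i => p i - y i := by
      funext i
      rcases le_or_gt (x i) 0 with h1 | h1
      · rw [hpdef, hydef]
        simp only
        rw [max_eq_right h1, max_eq_left (by linarith)]
        ring
      · rw [hpdef, hydef]
        simp only
        rw [max_eq_left (le_of_lt h1), max_eq_right (by linarith)]
        ring
    have hyne : y ≠ 0 := by
      intro h0
      have : y j = 0 := congrFun h0 j
      rw [hydef] at this
      simp only at this
      rw [max_eq_left (by linarith)] at this
      linarith
    have hQpos : 0 < y ⬝ᵥ A.mulVec x := by
      rw [hAx]
      have hj' : 0 < y j := by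
        rw [hydef]; simp only; rw [max_eq_left (by linarith)]; linarith
      simp only [dotProduct]
      apply Finset.sum_pos' (fun i _ => by simpa using hynn i)
      exact ⟨j, Finset.mem_univ j, by simpa using hj'⟩
    have hyy : 0 < y ⬝ᵥ A.mulVec y := by
      simpa using hneg.dotProduct_mulVec_pos hyne
    have hcross : y ⬝ᵥ A.mulVec p ≤ 0 := by
      simp only [dotProduct]
      apply Finset.sum_nonpos
      intro i _
      rw [Matrix.mulVec, dotProduct, Finset.mul_sum]
      apply Finset.sum_nonpos
      intro k _
      rcases eq_or_ne i k with rfl | hik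
      · have : y i * (A i i * p i) = A i i * (y i * p i) := by ring
        rw [this, hyp]
        simp
      · have h1 : A i k ≤ 0 := hAoff i k hik
        have : y i * (A i k * p k) = A i k * (y i * p k) := by ring
        rw [this]
        exact mul_nonpos_of_nonpos_of_nonneg h1 (mul_nonneg (hynn i) (hpnn k))
    have hsplit : y ⬝ᵥ A.mulVec x = y ⬝ᵥ A.mulVec p - y ⬝ᵥ A.mulVec y := by
      rw [hxpy]
      have : (fun i => p i - y i) = p - y := rfl
      rw [this, Matrix.mulVec_sub, dotProduct_sub]
    rw [hsplit] at hQpos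
    linarith
  -- Step 2: x is strictly positive
  have hxpos : ∀ j, 0 < x j := by
    intro j
    rcases lt_or_eq_of_le (hxnonneg j) with h | h
    · exact h
    have h1 : A.mulVec x j = 1 := congrFun hAx j
    have h2 : A.mulVec x j ≤ 0 := by
      simp only [Matrix.mulVec, dotProduct]
      apply Finset.sum_nonpos
      intro k _
      rcases eq_or_ne j k with rfl | hjk
      · rw [← h]; simp
      · exact mul_nonpos_of_nonpos_of_nonneg (hAoff j k hjk) (hxnonneg k)
    linarith
  -- Step 3: choose integer vector by rounding C * x upward
  set C : ℤ := (∑ i : Fin n, ∑ j : Fin n, |M i j|) + 1 with hCdef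
  have hC1 : 1 ≤ C := by
    rw [hCdef]
    have : 0 ≤ ∑ i : Fin n, ∑ j : Fin n, |M i j| :=
      Finset.sum_nonneg fun i _ => Finset.sum_nonneg fun j _ => abs_nonneg _
    linarith
  have hCrow : ∀ i : Fin n, (∑ j : Fin n, |M i j|) < C := by
    intro i
    rw [hCdef]
    have : ∑ j : Fin n, |M i j| ≤ ∑ i : Fin n, ∑ j : Fin n, |M i j| :=
      Finset.single_le_sum (f := fun i => ∑ j : Fin n, |M i j|)
        (fun i _ => Finset.sum_nonneg fun j _ => abs_nonneg _) (Finset.mem_univ i)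
    linarith
  refine ⟨fun j => ⌈(C : ℝ) * x j⌉, ?_, ?_⟩
  · intro j
    rw [Int.ceil_pos]
    exact mul_pos (by exact_mod_cast hC1.trans_lt' (by norm_num) |>.le.lt_of_ne' (by exact_mod_cast (by linarith : (0:ℤ) < C).ne')) (hxpos j)
  · intro i
    have main : ((M.mulVec (fun j => ⌈(C : ℝ) * x j⌉) i : ℤ) : ℝ) < 0 := by
      have hcast : ((M.mulVec (fun j => ⌈(C : ℝ) * x j⌉) i : ℤ) : ℝ)
          = ∑ j : Fin n, (M i j : ℝ) * (⌈(C : ℝ) * x j⌉ : ℝ) := by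
        simp only [Matrix.mulVec, dotProduct]
        push_cast
        rfl
      rw [hcast]
      have hMx : ∑ j : Fin n, (M i j : ℝ) * ((C:ℝ) * x j) = -(C : ℝ) := by
        have h1 : A.mulVec x i = 1 := congrFun hAx i
        simp only [Matrix.mulVec, dotProduct] at h1
        have : ∑ j : Fin n, (M i j : ℝ) * x j = -1 := by
          have h2 : ∑ j : Fin n, A i j * x j = 1 := h1
          have h3 : ∑ j : Fin n, A i j * x j = -∑ j : Fin n, (M i j : ℝ) * x j := by
            rw [← Finset.sum_neg_distrib]
            apply Finset.sum_congr rfl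
            intro j _
            rw [hAentry]; ring
          rw [h3] at h2
          linarith
        calc ∑ j : Fin n, (M i j : ℝ) * ((C:ℝ) * x j)
            = (C:ℝ) * ∑ j : Fin n, (M i j : ℝ) * x j := by
              rw [Finset.mul_sum]; apply Finset.sum_congr rfl; intro j _; ring
          _ = -(C:ℝ) := by rw [this]; ring
      have hdelta : ∀ j : Fin n, (M i j : ℝ) * ((⌈(C : ℝ) * x j⌉ : ℝ) - (C:ℝ) * x j)
          ≤ |(M i j : ℝ)| := by
        intro j
        have h0 : 0 ≤ (⌈(C : ℝ) * x j⌉ : ℝ) - (C:ℝ) * x j := by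
          linarith [Int.le_ceil ((C : ℝ) * x j)]
        have h1 : (⌈(C : ℝ) * x j⌉ : ℝ) - (C:ℝ) * x j ≤ 1 := by
          linarith [Int.ceil_lt_add_one ((C : ℝ) * x j)]
        calc (M i j : ℝ) * ((⌈(C : ℝ) * x j⌉ : ℝ) - (C:ℝ) * x j)
            ≤ |(M i j : ℝ)| * ((⌈(C : ℝ) * x j⌉ : ℝ) - (C:ℝ) * x j) :=
              mul_le_mul_of_nonneg_right (le_abs_self _) h0
          _ ≤ |(M i j : ℝ)| * 1 := mul_le_mul_of_nonneg_left h1 (abs_nonneg _)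
          _ = |(M i j : ℝ)| := mul_one _
      have hsum : ∑ j : Fin n, (M i j : ℝ) * (⌈(C : ℝ) * x j⌉ : ℝ)
          ≤ -(C:ℝ) + ∑ j : Fin n, |(M i j : ℝ)| := by
        have : ∑ j : Fin n, (M i j : ℝ) * (⌈(C : ℝ) * x j⌉ : ℝ)
            = ∑ j : Fin n, (M i j : ℝ) * ((C:ℝ) * x j)
              + ∑ j : Fin n, (M i j : ℝ) * ((⌈(C : ℝ) * x j⌉ : ℝ) - (C:ℝ) * x j) := by
          rw [← Finset.sum_add_distrib]
          apply Finset.sum_congr rfl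
          intro j _; ring
        rw [this, hMx]
        have := Finset.sum_le_sum (fun j (_ : j ∈ Finset.univ) => hdelta j)
        linarith
      have habs : ∑ j : Fin n, |(M i j : ℝ)| < (C : ℝ) := by
        have := hCrow i
        have hc : ((∑ j : Fin n, |M i j| : ℤ) : ℝ) = ∑ j : Fin n, |(M i j : ℝ)| := by
          push_cast; rfl
        rw [← hc]
        exact_mod_cast this
      linarith

    exact_mod_cast main
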